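/- Let G be a finite connected graph with vertex weights w : V(G) → ℝ≥0, let {F_1, …, F_k} be a c-partition of E(G), and let e = uv ∈ F_i. Set U = ℓ_i(u), V = ℓ_i(v), so that E = UV is an edge of G_i = G/F_i, and define λ_i : V(G_i) → ℝ≥0 by λ_i(X) = Σ_{x ∈ V(X)} w(x). Then n_u(e|(G,w)) = n_U(E|(G_i,λ_i)) and n_v(e|(G,w)) = n_V(E|(G_i,λ_i)). -/

import Mathlib

/-!
Fix a set `F` of edges closed under `Θ` and a walk `P`, and consider the potential
`φ_P(z) = ∑ (d(z,a) - d(z,b))` over the darts `(a,b)` of `P` whose edge lies in `F`.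
Across an edge outside `F` the potential is constant, since such an edge is `Θ`-related to no
edge of `F`; across an edge `pq ∈ F` its change telescopes along `P` and is at most `2`.
If `P` is a geodesic from `z` to `y`, then `φ_P(y) - φ_P(z)` is twice the number of
`F`-edges of `P`. Hence geodesics minimise the number of `F`-edges among walks with the same
ends, and this minimum is the distance between the corresponding vertices of `G/F`.
Consequently, for `uv ∈ F`, a vertex is closer to `u` than to `v` in `G` if and only if its
component is closer to `ℓ(u)` than to `ℓ(v)` in `G/F`, and grouping the weights by
components gives the theorem.
-/

open SimpleGraph

noncomputable section

/-- The Djoković–Winkler relation `Θ` on the edges of a graph `G`: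
edges `e = xy` and `f = ab` are related iff
`d(x,a) + d(y,b) ≠ d(x,b) + d(y,a)`. -/
def theta {V : Type*} (G : SimpleGraph V) (e f : Sym2 V) : Prop :=
  e ∈ G.edgeSet ∧ f ∈ G.edgeSet ∧
    ∃ x y a b : V, e = s(x, y) ∧ f = s(a, b) ∧
      G.dist x a + G.dist y b ≠ G.dist x b + G.dist y a

/-- The quotient graph `G/F`: its vertices are the connected components of
`G − F`, two components being adjacent iff some vertex of one is adjacent in
`G` to some vertex of the other. -/
def quotientGraph {V : Type*} (G : SimpleGraph V) (F : Set (Sym2 V)) :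
    SimpleGraph (G.deleteEdges F).ConnectedComponent where
  Adj X Y := X ≠ Y ∧ ∃ x y : V,
    (G.deleteEdges F).connectedComponentMk x = X ∧
    (G.deleteEdges F).connectedComponentMk y = Y ∧ G.Adj x y
  symm := by
    constructor
    rintro X Y ⟨hne, x, y, hx, hy, hadj⟩
    exact ⟨hne.symm, y, x, hy, hx, hadj.symm⟩
  loopless := by
    constructor
    rintro X ⟨hne, -⟩
    exact hne rfl

/-- `F₁, …, F_k` is a partition of the edge set of `G`. -/
def IsEdgePartition {V : Type*} (G : SimpleGraph V) {k : ℕ}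
    (F : Fin k → Set (Sym2 V)) : Prop :=
  (∀ i, F i ⊆ G.edgeSet) ∧ (∀ e ∈ G.edgeSet, ∃ i, e ∈ F i) ∧
    (∀ i j, i ≠ j → Disjoint (F i) (F j))

/-- `F₁, …, F_k` is a c-partition of the edge set of `G`: a partition such
that every `Θ*`-class (class of the transitive closure of `Θ`) is contained
in some part. -/
def IsCPartition {V : Type*} (G : SimpleGraph V) {k : ℕ}
    (F : Fin k → Set (Sym2 V)) : Prop :=
  IsEdgePartition G F ∧
    ∀ e f : Sym2 V, Relation.TransGen (theta G) e f → ∀ i, e ∈ F i → f ∈ F i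

/-- For an edge `e = uv`, `nW G w u v` is `n_u(e|(G,w))`, the sum of the
weights of the vertices strictly closer to `u` than to `v`. -/
def nW {V : Type*} (G : SimpleGraph V) (w : V → NNReal) (u v : V) : NNReal :=
  ∑ᶠ x ∈ {x : V | G.dist x u < G.dist x v}, w x

/-- The Mostar index of a vertex-edge-weighted graph `(G, w, w')`. -/
def MostarW {V : Type*} (G : SimpleGraph V) (w : V → NNReal)
    (w' : Sym2 V → NNReal) : ℝ :=
  ∑ᶠ e ∈ G.edgeSet, (w' e : ℝ) *
    Sym2.lift ⟨fun u v => |((nW G w u v : ℝ)) - ((nW G w v u : ℝ))|,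
      fun _ _ => abs_sub_comm _ _⟩ e

/-- The (unweighted) Mostar index of a graph `G`. -/
def Mostar {V : Type*} (G : SimpleGraph V) : ℝ :=
  ∑ᶠ e ∈ G.edgeSet,
    Sym2.lift ⟨fun u v =>
      |((Nat.card {x : V | G.dist x u < G.dist x v} : ℝ)) -
        ((Nat.card {x : V | G.dist x v < G.dist x u} : ℝ))|,
      fun _ _ => abs_sub_comm _ _⟩ e

open scoped Classical

theorem finsum_mem_preimage_eq_finsum_mem_fiber {α β M : Type*} [AddCommMonoid M]
    [Finite α] [Finite β] (f : α → β) (s : Set β) (w : α → M) :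
    ∑ᶠ x ∈ f ⁻¹' s, w x = ∑ᶠ y ∈ s, ∑ᶠ x ∈ f ⁻¹' {y}, w x := by
  rw [← Set.biUnion_preimage_singleton,
    finsum_mem_biUnion (Set.pairwiseDisjoint_fiber f s) s.toFinite fun y _ => Set.toFinite _]

section ThetaClosed

variable {V : Type*} {G : SimpleGraph V} {F : Set (Sym2 V)}

def IsThetaClosed (G : SimpleGraph V) (F : Set (Sym2 V)) : Prop :=
  ∀ e f, theta G e f → e ∈ F → f ∈ F

theorem IsCPartition.isThetaClosed {k : ℕ} {F : Fin k → Set (Sym2 V)} (hF : IsCPartition G F)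
    (i : Fin k) : IsThetaClosed G (F i) :=
  fun e f hef he => hF.2 e f (.single hef) i he

theorem IsThetaClosed.dist_add_dist_eq (hF : IsThetaClosed G F) {a b p q : V}
    (hab : G.Adj a b) (hpq : G.Adj p q) (habF : s(a, b) ∈ F) (hpqF : s(p, q) ∉ F) :
    G.dist a p + G.dist b q = G.dist a q + G.dist b p := by
  by_contra hne
  exact hpqF (hF _ _ ⟨hab, hpq, a, b, p, q, rfl, rfl, hne⟩ habF)

namespace SimpleGraph.Walk

noncomputable def potential (F : Set (Sym2 V)) {x y : V} (P : G.Walk x y) (z : V) : ℤ :=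
  (P.darts.map fun d => if d.edge ∈ F then (G.dist z d.fst : ℤ) - G.dist z d.snd else 0).sum

@[simp]
theorem potential_cons {a b y : V} (h : G.Adj a b) (P : G.Walk b y) (z : V) :
    (cons h P).potential F z =
      (if s(a, b) ∈ F then (G.dist z a : ℤ) - G.dist z b else 0) + P.potential F z :=
  rfl

theorem countP_edges_cons {a b y : V} (h : G.Adj a b) (P : G.Walk b y) :
    (cons h P).edges.countP (· ∈ F) = P.edges.countP (· ∈ F) + if s(a, b) ∈ F then 1 else 0 := by
  simp [edges_cons, List.countP_cons]

theorem potential_eq_of_notMem (hF : IsThetaClosed G F) {p q : V} (hpq : G.Adj p q)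
    (hpqF : s(p, q) ∉ F) {x y : V} (P : G.Walk x y) : P.potential F p = P.potential F q := by
  induction P with
  | nil => rfl
  | cons h P ih =>
    simp only [potential_cons, ih]
    split_ifs with hab
    · have := hF.dist_add_dist_eq h hpq hab hpqF
      simp only [dist_comm] at this ⊢
      omega
    · rfl

theorem potential_sub_of_mem (hF : IsThetaClosed G F) {p q : V} (hpq : G.Adj p q)
    (hpqF : s(p, q) ∈ F) {x y : V} (P : G.Walk x y) :
    P.potential F q - P.potential F p =
      ((G.dist x q : ℤ) - G.dist x p) - ((G.dist y q : ℤ) - G.dist y p) := by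
  induction P with
  | nil => simp [potential]
  | cons h P ih =>
    simp only [potential_cons]
    split_ifs with hab
    · simp only [dist_comm] at ih ⊢
      omega
    · have := hF.dist_add_dist_eq hpq h hpqF hab
      simp only [dist_comm] at this ih ⊢
      omega

theorem potential_sub_le (hF : IsThetaClosed G F) {p q : V} (hpq : G.Adj p q) {x y : V}
    (P : G.Walk x y) :
    P.potential F q - P.potential F p ≤ 2 * if s(p, q) ∈ F then 1 else 0 := by
  split_ifs with hpqF
  · rw [potential_sub_of_mem hF hpq hpqF]
    have := hpq.diff_dist_adj (u := x)
    have := hpq.diff_dist_adj (u := y)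
    omega
  · simp [potential_eq_of_notMem hF hpq hpqF]

theorem potential_sub_le_countP (hF : IsThetaClosed G F) {x y : V} (P : G.Walk x y) {a b : V}
    (W : G.Walk a b) : P.potential F b - P.potential F a ≤ 2 * W.edges.countP (· ∈ F) := by
  induction W with
  | nil => simp
  | cons h W ih =>
    have := potential_sub_le hF h P
    rw [countP_edges_cons]
    push_cast
    omega

theorem potential_sub_eq_of_dist_add_length {z a y : V} (P : G.Walk a y)
    (hP : G.dist z a + P.length = G.dist z y) :
    P.potential F y - P.potential F z = 2 * P.edges.countP (· ∈ F) := by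
  induction P with
  | nil => simp [potential]
  | @cons a b y h P ih =>
    rw [length_cons] at hP
    have hab : G.dist a b = 1 := dist_eq_one_iff_adj.2 h
    have hzb : G.dist z b = G.dist z a + 1 := by
      have := h.reachable.dist_triangle_right z
      have := P.reachable.dist_triangle_right z
      have := dist_le P
      omega
    have hay : G.dist a y = G.dist b y + 1 := by
      have := P.reachable.dist_triangle_right a
      have := (cons h P).reachable.dist_triangle_right z
      have := dist_le P
      omega
    have hPF := ih (by omega)
    simp only [potential_cons, countP_edges_cons]
    rw [dist_comm (u := y) (v := a), dist_comm (u := y) (v := b)]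
    split_ifs <;> push_cast <;> omega

theorem countP_le_of_length_eq_dist (hF : IsThetaClosed G F) {z y : V} {P : G.Walk z y}
    (hP : P.length = G.dist z y) (W : G.Walk z y) :
    P.edges.countP (· ∈ F) ≤ W.edges.countP (· ∈ F) := by
  have hPF := potential_sub_eq_of_dist_add_length (F := F) (z := z) P (by simp [hP])
  have hWF := potential_sub_le_countP hF P W
  omega

theorem countP_le_of_adj_of_dist_le (hF : IsThetaClosed G F) {z u v : V} (huv : G.Adj u v)
    (huvF : s(u, v) ∈ F) (hzuv : G.dist z u ≤ G.dist z v) {P : G.Walk z u}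
    (hP : P.length = G.dist z u) (W : G.Walk z v) :
    P.edges.countP (· ∈ F) ≤ W.edges.countP (· ∈ F) := by
  have hPF := potential_sub_eq_of_dist_add_length (F := F) (z := z) P (by simp [hP])
  have hvu := potential_sub_of_mem hF huv huvF P
  have hWF := potential_sub_le_countP hF P W
  have : G.dist u v = 1 := dist_eq_one_iff_adj.2 huv
  rw [dist_self] at hvu
  omega

end SimpleGraph.Walk

section Quotient

open SimpleGraph.Walk

variable {V : Type*} {G : SimpleGraph V} {F : Set (Sym2 V)}

local notation "ℓ" => connectedComponentMk (deleteEdges G F)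

theorem exists_quotientGraph_walk_length_le {a b : V} (W : G.Walk a b) :
    ∃ R : (quotientGraph G F).Walk (ℓ a) (ℓ b), R.length ≤ W.edges.countP (· ∈ F) := by
  induction W with
  | nil => exact ⟨.nil, le_rfl⟩
  | @cons a b c h W ih =>
    obtain ⟨R, hR⟩ := ih
    rw [countP_edges_cons]
    by_cases hab : ℓ a = ℓ b
    · exact ⟨R.copy hab.symm rfl, by rw [length_copy]; omega⟩
    · have habF : s(a, b) ∈ F := by
        by_contra habF
        exact hab (ConnectedComponent.sound ((deleteEdges_adj ..).2 ⟨h, habF⟩).reachable)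
      have hadj : (quotientGraph G F).Adj (ℓ a) (ℓ b) := ⟨hab, a, b, rfl, rfl, h⟩
      exact ⟨.cons hadj R, by rw [length_cons, if_pos habF]; omega⟩

theorem exists_walk_countP_eq_zero_of_reachable_deleteEdges {a b : V} (h : (G.deleteEdges F).Reachable a b) :
    ∃ W : G.Walk a b, W.edges.countP (· ∈ F) = 0 := by
  obtain ⟨W⟩ := h
  have hW : ∀ e ∈ W.edges, e ∈ G.edgeSet \ F := by
    simpa only [← edgeSet_deleteEdges] using W.edges_subset_edgeSet
  refine ⟨W.transfer G fun e he => (hW e he).1, ?_⟩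
  simpa [edges_transfer, List.countP_eq_zero] using fun e he => (hW e he).2

theorem exists_walk_countP_le {X Y : (G.deleteEdges F).ConnectedComponent}
    (R : (quotientGraph G F).Walk X Y) {a b : V} (ha : ℓ a = X) (hb : ℓ b = Y) :
    ∃ W : G.Walk a b, W.edges.countP (· ∈ F) ≤ R.length := by
  induction R generalizing a with
  | nil =>
    obtain ⟨W, hW⟩ := exists_walk_countP_eq_zero_of_reachable_deleteEdges (ConnectedComponent.exact (ha.trans hb.symm))
    exact ⟨W, hW.le⟩
  | cons h R ih =>
    obtain ⟨-, x, y, hx, hy, hxy⟩ := id h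
    obtain ⟨W₁, hW₁⟩ := exists_walk_countP_eq_zero_of_reachable_deleteEdges (ConnectedComponent.exact (ha.trans hx.symm))
    obtain ⟨W₂, hW₂⟩ := ih hy hb
    refine ⟨W₁.append (.cons hxy W₂), ?_⟩
    rw [edges_append, List.countP_append, hW₁, countP_edges_cons, length_cons]
    split_ifs <;> omega

theorem quotientGraph_dist_le_countP {a b : V} (W : G.Walk a b) :
    (quotientGraph G F).dist (ℓ a) (ℓ b) ≤ W.edges.countP (· ∈ F) :=
  let ⟨R, hR⟩ := exists_quotientGraph_walk_length_le W
  (dist_le R).trans hR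

theorem exists_walk_countP_le_quotientGraph_dist (hG : G.Connected) (a b : V) :
    ∃ W : G.Walk a b, W.edges.countP (· ∈ F) ≤ (quotientGraph G F).dist (ℓ a) (ℓ b) := by
  obtain ⟨R, -⟩ := exists_quotientGraph_walk_length_le (F := F) (hG.preconnected a b).some
  obtain ⟨R₀, hR₀⟩ := Reachable.exists_walk_length_eq_dist ⟨R⟩
  exact hR₀ ▸ exists_walk_countP_le R₀ rfl rfl

theorem quotientGraph_dist_eq_countP (hG : G.Connected) (hF : IsThetaClosed G F) {z y : V}
    {P : G.Walk z y} (hP : P.length = G.dist z y) :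
    (quotientGraph G F).dist (ℓ z) (ℓ y) = P.edges.countP (· ∈ F) := by
  obtain ⟨W, hW⟩ := exists_walk_countP_le_quotientGraph_dist hG z y
  exact (quotientGraph_dist_le_countP P).antisymm ((countP_le_of_length_eq_dist hF hP W).trans hW)

theorem quotientGraph_dist_le_of_dist_le (hG : G.Connected) (hF : IsThetaClosed G F) {u v : V}
    (huv : G.Adj u v) (huvF : s(u, v) ∈ F) {z : V} (hzuv : G.dist z u ≤ G.dist z v) :
    (quotientGraph G F).dist (ℓ z) (ℓ u) ≤ (quotientGraph G F).dist (ℓ z) (ℓ v) := by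
  obtain ⟨P, hP⟩ := hG.exists_walk_length_eq_dist z u
  obtain ⟨W, hW⟩ := exists_walk_countP_le_quotientGraph_dist hG z v
  rw [quotientGraph_dist_eq_countP hG hF hP]
  exact (countP_le_of_adj_of_dist_le hF huv huvF hzuv hP W).trans hW

theorem quotientGraph_dist_lt_of_dist_lt (hG : G.Connected) (hF : IsThetaClosed G F) {u v : V}
    (huv : G.Adj u v) (huvF : s(u, v) ∈ F) {z : V} (hzuv : G.dist z u < G.dist z v) :
    (quotientGraph G F).dist (ℓ z) (ℓ u) < (quotientGraph G F).dist (ℓ z) (ℓ v) := by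
  obtain ⟨P, hP⟩ := hG.exists_walk_length_eq_dist z u
  have hPv : (P.concat huv).length = G.dist z v := by
    have := huv.diff_dist_adj (u := z)
    rw [length_concat]
    omega
  rw [quotientGraph_dist_eq_countP hG hF hP, quotientGraph_dist_eq_countP hG hF hPv]
  simp [edges_concat, huvF]

theorem quotientGraph_dist_lt_iff (hG : G.Connected) (hF : IsThetaClosed G F) {u v : V}
    (huv : G.Adj u v) (huvF : s(u, v) ∈ F) (z : V) :
    (quotientGraph G F).dist (ℓ z) (ℓ u) < (quotientGraph G F).dist (ℓ z) (ℓ v) ↔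
      G.dist z u < G.dist z v := by
  refine ⟨fun h => ?_, quotientGraph_dist_lt_of_dist_lt hG hF huv huvF⟩
  by_contra! hzvu
  exact (quotientGraph_dist_le_of_dist_le hG hF huv.symm (Sym2.eq_swap ▸ huvF) hzvu).not_gt h

theorem nW_eq_nW_quotientGraph [Finite V] (hG : G.Connected) (hF : IsThetaClosed G F)
    (w : V → NNReal) {u v : V} (huv : G.Adj u v) (huvF : s(u, v) ∈ F) :
    nW G w u v = nW (quotientGraph G F) (fun X => ∑ᶠ x ∈ {x | ℓ x = X}, w x) (ℓ u) (ℓ v) := by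
  have hset : {x | G.dist x u < G.dist x v} =
      ℓ ⁻¹' {X | (quotientGraph G F).dist X (ℓ u) < (quotientGraph G F).dist X (ℓ v)} :=
    Set.ext fun z => (quotientGraph_dist_lt_iff hG hF huv huvF z).symm
  rw [nW, nW, hset, finsum_mem_preimage_eq_finsum_mem_fiber]
  rfl

end Quotient

end ThetaClosed

/-- if `{F₁, …, F_k}` is a c-partition of the edge set of a finite
connected graph `G` with vertex weights `w` and `e = uv ∈ F_i`, then
`n_u(e|(G,w)) = n_U(E|(G_i,λ_i))` and `n_v(e|(G,w)) = n_V(E|(G_i,λ_i))`,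
where `λ_i(X)` is the total weight of the component `X`. -/
theorem nW_eq_quotient_nW {V : Type*} [Fintype V] (G : SimpleGraph V)
    (hG : G.Connected) (w : V → NNReal) {k : ℕ} (F : Fin k → Set (Sym2 V))
    (hF : IsCPartition G F) (i : Fin k) (u v : V) (he : s(u, v) ∈ F i) :
    nW G w u v = nW (quotientGraph G (F i))
        (fun X => ∑ᶠ x ∈ {x : V |
            (G.deleteEdges (F i)).connectedComponentMk x = X}, w x)
        ((G.deleteEdges (F i)).connectedComponentMk u)
        ((G.deleteEdges (F i)).connectedComponentMk v) ∧
      nW G w v u = nW (quotientGraph G (F i))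
        (fun X => ∑ᶠ x ∈ {x : V |
            (G.deleteEdges (F i)).connectedComponentMk x = X}, w x)
        ((G.deleteEdges (F i)).connectedComponentMk v)
        ((G.deleteEdges (F i)).connectedComponentMk u) := by
  have hFi := hF.isThetaClosed i
  have huv : G.Adj u v := hF.1.1 i he
  exact ⟨nW_eq_nW_quotientGraph hG hFi w huv he,
    nW_eq_nW_quotientGraph hG hFi w huv.symm (Sym2.eq_swap ▸ he)⟩
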